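/- arXiv:2108.07041 — 6 statements merged into one kernel-verified Lean document; each statement's English description precedes it below -/
import Mathlib

section
/- Let A be a finite nonempty set, q : A → ℝ, τ > 0, α ∈ [0,1), and μ a strictly positive probability distribution on A. Define π*(a) = μ(a)^α · exp(q(a)/τ) / Σ_{a'∈A} μ(a')^α · exp(q(a')/τ). Then for every probability distribution p on A: Σ_a p(a)·q(a) + (1−α)·τ·H(p) − α·τ·KL(p‖μ) ≤ Σ_a π*(a)·q(a) + (1−α)·τ·H(π*) − α·τ·KL(π*‖μ). -/
/-- Shannon entropy of a finitely-supported distribution, with the convention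
`0 · ln 0 = 0` (inherited from `Real.log 0 = 0`). -/
noncomputable def discreteEntropy {A : Type*} [Fintype A] (p : A → ℝ) : ℝ :=
  -∑ a, p a * Real.log (p a)

/-- Kullback–Leibler divergence between finitely-supported distributions, with the
convention `0 · ln 0 = 0`. -/
noncomputable def discreteKL {A : Type*} [Fintype A] (p μ : A → ℝ) : ℝ :=
  ∑ a, p a * (Real.log (p a) - Real.log (μ a))

/-- Gibbs' inequality: KL divergence is nonnegative. -/
lemma gibbs_nonneg {A : Type*} [Fintype A] (p s : A → ℝ)
    (hp0 : ∀ a, 0 ≤ p a) (hpsum : ∑ a, p a = 1)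
    (hs0 : ∀ a, 0 < s a) (hssum : ∑ a, s a = 1) :
    0 ≤ ∑ a, p a * (Real.log (p a) - Real.log (s a)) := by
  have key : ∀ a, p a - s a ≤ p a * (Real.log (p a) - Real.log (s a)) := by
    intro a
    rcases eq_or_lt_of_le (hp0 a) with h | h
    · simp [← h]; exact (hs0 a).le
    · have hx : 0 < s a / p a := div_pos (hs0 a) h
      have hlog := Real.log_le_sub_one_of_pos hx
      rw [Real.log_div (hs0 a).ne' h.ne'] at hlog
      have h2 := mul_le_mul_of_nonneg_left hlog h.le
      have hps : p a * (s a / p a - 1) = s a - p a := by field_simp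
      nlinarith [h2, hps]
  calc (0 : ℝ) = ∑ a, (p a - s a) := by rw [Finset.sum_sub_distrib, hpsum, hssum]; ring
  _ ≤ _ := Finset.sum_le_sum fun a _ => key a

/-- `π*(a) ∝ μ(a)^α exp(q(a)/τ)` maximizes
`p ↦ ⟨p, q⟩ + (1−α)τ H(p) − ατ KL(p‖μ)` over distributions on `A`. -/
theorem softmax_kl_entropy_maximizer
    {A : Type*} [Fintype A] [Nonempty A]
    (q : A → ℝ) (τ α : ℝ) (hτ : 0 < τ) (hα0 : 0 ≤ α) (hα1 : α < 1)
    (μ : A → ℝ) (hμpos : ∀ a, 0 < μ a) (hμsum : ∑ a, μ a = 1)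
    (πstar : A → ℝ)
    (hπstar : ∀ a, πstar a =
      μ a ^ α * Real.exp (q a / τ) / ∑ a', μ a' ^ α * Real.exp (q a' / τ))
    (p : A → ℝ) (hp0 : ∀ a, 0 ≤ p a) (hpsum : ∑ a, p a = 1) :
    ∑ a, p a * q a + (1 - α) * τ * discreteEntropy p - α * τ * discreteKL p μ ≤
      ∑ a, πstar a * q a + (1 - α) * τ * discreteEntropy πstar
        - α * τ * discreteKL πstar μ := by
  set w : A → ℝ := fun a => μ a ^ α * Real.exp (q a / τ) with hw
  have hwpos : ∀ a, 0 < w a := fun a =>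
    mul_pos (Real.rpow_pos_of_pos (hμpos a) α) (Real.exp_pos _)
  set Z : ℝ := ∑ a', w a' with hZ
  have hZpos : 0 < Z := Finset.sum_pos (fun a _ => hwpos a) Finset.univ_nonempty
  have hπpos : ∀ a, 0 < πstar a := fun a => by
    rw [hπstar a]; exact div_pos (hwpos a) hZpos
  have hπsum : ∑ a, πstar a = 1 := by
    simp only [hπstar]
    rw [← Finset.sum_div, div_self hZpos.ne']
  have hlogπ : ∀ a, Real.log (πstar a) = α * Real.log (μ a) + q a / τ - Real.log Z := by
    intro a
    rw [hπstar a, Real.log_div (hwpos a).ne' hZpos.ne', Real.log_mul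
      (Real.rpow_pos_of_pos (hμpos a) α).ne' (Real.exp_pos _).ne',
      Real.log_rpow (hμpos a), Real.log_exp]
  -- key identity: F(r) = τ * log Z - τ * KL(r ‖ πstar) for r a distribution
  have key : ∀ r : A → ℝ, (∀ a, 0 ≤ r a) → ∑ a, r a = 1 →
      ∑ a, r a * q a + (1 - α) * τ * discreteEntropy r - α * τ * discreteKL r μ
        = τ * Real.log Z - τ * ∑ a, r a * (Real.log (r a) - Real.log (πstar a)) := by
    intro r hr0 hrsum
    have hτne : τ ≠ 0 := hτ.ne'
    have main : ∑ a, (r a * q a - (1-α)*τ*(r a * Real.log (r a))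
            - α*τ*(r a * (Real.log (r a) - Real.log (μ a))))
        = ∑ a, (τ * (r a * Real.log Z)
            - τ * (r a * (Real.log (r a) - Real.log (πstar a)))) := by
      apply Finset.sum_congr rfl
      intro a _
      rw [hlogπ a]
      field_simp
      ring
    have e1 : ∑ a, r a * q a + (1 - α) * τ * discreteEntropy r
          - α * τ * discreteKL r μ
        = ∑ a, (r a * q a - (1-α)*τ*(r a * Real.log (r a))
            - α*τ*(r a * (Real.log (r a) - Real.log (μ a)))) := by
      unfold discreteEntropy discreteKL
      rw [Finset.sum_sub_distrib, Finset.sum_sub_distrib,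
        ← Finset.mul_sum, ← Finset.mul_sum]
      ring
    have e2 : τ * Real.log Z - τ * ∑ a, r a * (Real.log (r a) - Real.log (πstar a))
        = ∑ a, (τ * (r a * Real.log Z)
            - τ * (r a * (Real.log (r a) - Real.log (πstar a)))) := by
      rw [Finset.sum_sub_distrib, ← Finset.mul_sum, ← Finset.mul_sum,
        ← Finset.sum_mul, hrsum, one_mul]
    rw [e1, e2, main]
  rw [key p hp0 hpsum, key πstar (fun a => (hπpos a).le) hπsum]
  have h1 : 0 ≤ ∑ a, p a * (Real.log (p a) - Real.log (πstar a)) :=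
    gibbs_nonneg p πstar hp0 hpsum hπpos hπsum
  have h2 : ∑ a, πstar a * (Real.log (πstar a) - Real.log (πstar a)) = 0 := by simp
  rw [h2]
  nlinarith [hτ.le]
end

section
/- Let A be a finite nonempty set, q : A → ℝ, τ > 0, α ∈ [0,1), and μ a strictly positive probability distribution on A. Define π*(a) = μ(a)^α · exp(q(a)/τ) / Σ_{a'∈A} μ(a')^α · exp(q(a')/τ). Then Σ_a π*(a)·q(a) + (1−α)·τ·H(π*) − α·τ·KL(π*‖μ) = τ·ln Σ_{a∈A} μ(a)^α · exp(q(a)/τ), i.e. the maximum over the simplex of p ↦ Σ_a p(a)·q(a) + (1−α)·τ·H(p) − α·τ·KL(p‖μ) equals τ·ln Σ_{a∈A} μ(a)^α · exp(q(a)/τ). -/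
/-- the value of the KL-entropy-regularized maximization at the maximizer
`π*(a) ∝ μ(a)^α exp(q(a)/τ)` is the soft maximum `τ ln Σ_a μ(a)^α exp(q(a)/τ)`,
i.e. this soft maximum is the maximum of the objective over the simplex. -/
theorem softmax_kl_entropy_max_value
    {A : Type*} [Fintype A] [Nonempty A]
    (q : A → ℝ) (τ α : ℝ) (hτ : 0 < τ) (hα0 : 0 ≤ α) (hα1 : α < 1)
    (μ : A → ℝ) (hμpos : ∀ a, 0 < μ a) (hμsum : ∑ a, μ a = 1)
    (πstar : A → ℝ)
    (hπstar : ∀ a, πstar a =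
      μ a ^ α * Real.exp (q a / τ) / ∑ a', μ a' ^ α * Real.exp (q a' / τ)) :
    (∑ a, πstar a * q a + (1 - α) * τ * discreteEntropy πstar
        - α * τ * discreteKL πstar μ
      = τ * Real.log (∑ a, μ a ^ α * Real.exp (q a / τ))) ∧
    (∀ p : A → ℝ, (∀ a, 0 ≤ p a) → (∑ a, p a = 1) →
      ∑ a, p a * q a + (1 - α) * τ * discreteEntropy p - α * τ * discreteKL p μ ≤
        τ * Real.log (∑ a, μ a ^ α * Real.exp (q a / τ))) := by
  set Z := ∑ a', μ a' ^ α * Real.exp (q a' / τ) with hZ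
  have hw : ∀ a, 0 < μ a ^ α * Real.exp (q a / τ) := fun a =>
    mul_pos (Real.rpow_pos_of_pos (hμpos a) α) (Real.exp_pos _)
  have hZpos : 0 < Z := Finset.sum_pos (fun a _ => hw a) Finset.univ_nonempty
  have hπpos : ∀ a, 0 < πstar a := fun a => by
    rw [hπstar]; exact div_pos (hw a) hZpos
  have hπsum : ∑ a, πstar a = 1 := by
    simp only [hπstar]
    rw [← Finset.sum_div, ← hZ, div_self hZpos.ne']
  have hlogπ : ∀ a, Real.log (πstar a) = α * Real.log (μ a) + q a / τ - Real.log Z := by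
    intro a
    rw [hπstar a, Real.log_div (hw a).ne' hZpos.ne',
      Real.log_mul (Real.rpow_pos_of_pos (hμpos a) α).ne' (Real.exp_pos _).ne',
      Real.log_rpow (hμpos a), Real.log_exp]
  have key : ∀ p : A → ℝ, (∑ a, p a = 1) →
      ∑ a, p a * q a + (1 - α) * τ * discreteEntropy p - α * τ * discreteKL p μ
      = τ * Real.log Z - τ * ∑ a, p a * (Real.log (p a) - Real.log (πstar a)) := by
    intro p hp1
    unfold discreteEntropy discreteKL
    have e1 : ∑ a, p a * (Real.log (p a) - Real.log (πstar a))
        = ∑ a, p a * Real.log (p a) - α * ∑ a, p a * Real.log (μ a)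
          - (∑ a, p a * q a) / τ + Real.log Z := by
      have : ∀ a ∈ Finset.univ, p a * (Real.log (p a) - Real.log (πstar a))
          = p a * Real.log (p a) - α * (p a * Real.log (μ a))
            - (p a * q a) / τ + p a * Real.log Z := by
        intro a _
        rw [hlogπ a]
        field_simp
        ring
      rw [Finset.sum_congr rfl this]
      rw [Finset.sum_add_distrib, Finset.sum_sub_distrib, Finset.sum_sub_distrib,
        ← Finset.mul_sum, ← Finset.sum_div, ← Finset.sum_mul, hp1, one_mul]
    have e2 : ∑ a, p a * (Real.log (p a) - Real.log (μ a))
        = ∑ a, p a * Real.log (p a) - ∑ a, p a * Real.log (μ a) := by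
      simp [mul_sub, Finset.sum_sub_distrib]
    rw [e1, e2]
    field_simp
    ring
  have gibbs : ∀ p : A → ℝ, (∀ a, 0 ≤ p a) → (∑ a, p a = 1) →
      0 ≤ ∑ a, p a * (Real.log (p a) - Real.log (πstar a)) := by
    intro p hp hp1
    have h1 : ∀ a ∈ Finset.univ, p a * (Real.log (πstar a) - Real.log (p a))
        ≤ πstar a - p a := by
      intro a _
      rcases eq_or_lt_of_le (hp a) with h | h
      · rw [← h]; simpa using (hπpos a).le
      · have hlog := Real.log_le_sub_one_of_pos (div_pos (hπpos a) h)
        rw [Real.log_div (hπpos a).ne' h.ne'] at hlog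
        calc p a * (Real.log (πstar a) - Real.log (p a))
            ≤ p a * (πstar a / p a - 1) := by
              exact mul_le_mul_of_nonneg_left hlog h.le
          _ = πstar a - p a := by field_simp
    have h2 := Finset.sum_le_sum h1
    rw [Finset.sum_sub_distrib, hπsum, hp1, sub_self] at h2
    have h3 : ∑ a, p a * (Real.log (p a) - Real.log (πstar a))
        = -∑ a, p a * (Real.log (πstar a) - Real.log (p a)) := by
      rw [← Finset.sum_neg_distrib]
      exact Finset.sum_congr rfl fun a _ => by ring
    rw [h3]
    linarith
  constructor
  · rw [key πstar hπsum]
    have : ∑ a, πstar a * (Real.log (πstar a) - Real.log (πstar a)) = 0 := by simp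
    rw [this]; ring
  · intro p hp hp1
    rw [key p hp1]
    have := gibbs p hp hp1
    nlinarith [mul_nonneg hτ.le this]
end

section
/- Let A be a finite nonempty set, q : A → ℝ, τ > 0, α ∈ [0,1), and μ a strictly positive probability distribution on A. Define π*(a) = μ(a)^α · exp(q(a)/τ) / Σ_{a'∈A} μ(a')^α · exp(q(a')/τ). Then π* is the unique maximizer over probability distributions on A of p ↦ Σ_a p(a)·q(a) + (1−α)·τ·H(p) − α·τ·KL(p‖μ): for every probability distribution p on A with p ≠ π*, the objective at p is strictly less than the objective at π*. -/
lemma gibbs_term_le {x w : ℝ} (hx : 0 ≤ x) (hw : 0 < w) :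
    x * (Real.log w - Real.log x) ≤ w - x := by
  rcases eq_or_lt_of_le hx with h | h
  · simp [← h]; positivity
  · have hdiv : 0 < w / x := div_pos hw h
    have := Real.log_le_sub_one_of_pos hdiv
    rw [Real.log_div hw.ne' h.ne'] at this
    have h2 := mul_le_mul_of_nonneg_left this hx
    have hxw : x * (w / x) = w := by field_simp
    have h3 : x * (w / x - 1) = w - x := by
      rw [mul_sub, hxw, mul_one]
    linarith

lemma gibbs_term_lt {x w : ℝ} (hx : 0 ≤ x) (hw : 0 < w) (hne : x ≠ w) :
    x * (Real.log w - Real.log x) < w - x := by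
  rcases eq_or_lt_of_le hx with h | h
  · simp [← h]; linarith
  · have hdiv : 0 < w / x := div_pos hw h
    have hd1 : w / x ≠ 1 := by
      intro h1
      exact hne (by field_simp at h1; linarith)
    have := Real.log_lt_sub_one_of_pos hdiv hd1
    rw [Real.log_div hw.ne' h.ne'] at this
    have h2 := mul_lt_mul_of_pos_left this h
    have hxw : x * (w / x) = w := by field_simp
    have h3 : x * (w / x - 1) = w - x := by
      rw [mul_sub, hxw, mul_one]
    linarith

/-- Gibbs' inequality, strict form. -/
lemma gibbs {A : Type*} [Fintype A] (p w : A → ℝ)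
    (hp0 : ∀ a, 0 ≤ p a) (hw : ∀ a, 0 < w a)
    (hpsum : ∑ a, p a = 1) (hwsum : ∑ a, w a = 1) (hne : p ≠ w) :
    0 < ∑ a, p a * (Real.log (p a) - Real.log (w a)) := by
  obtain ⟨a0, ha0⟩ := Function.ne_iff.mp hne
  have hlt : ∑ a, p a * (Real.log (w a) - Real.log (p a)) < ∑ a, (w a - p a) := by
    refine Finset.sum_lt_sum (fun a _ => gibbs_term_le (hp0 a) (hw a)) ⟨a0, Finset.mem_univ a0, gibbs_term_lt (hp0 a0) (hw a0) ha0⟩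
  rw [Finset.sum_sub_distrib, hpsum, hwsum] at hlt
  have : ∑ a, p a * (Real.log (p a) - Real.log (w a))
      = -∑ a, p a * (Real.log (w a) - Real.log (p a)) := by
    rw [← Finset.sum_neg_distrib]
    exact Finset.sum_congr rfl (fun a _ => by ring)
  rw [this]; linarith

/-- `π*(a) ∝ μ(a)^α exp(q(a)/τ)` is the *unique* maximizer of
`p ↦ ⟨p, q⟩ + (1−α)τ H(p) − ατ KL(p‖μ)` over distributions on `A`: any other
distribution attains a strictly smaller objective value. -/
theorem softmax_kl_entropy_unique_maximizer
    {A : Type*} [Fintype A] [Nonempty A]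
    (q : A → ℝ) (τ α : ℝ) (hτ : 0 < τ) (hα0 : 0 ≤ α) (hα1 : α < 1)
    (μ : A → ℝ) (hμpos : ∀ a, 0 < μ a) (hμsum : ∑ a, μ a = 1)
    (πstar : A → ℝ)
    (hπstar : ∀ a, πstar a =
      μ a ^ α * Real.exp (q a / τ) / ∑ a', μ a' ^ α * Real.exp (q a' / τ))
    (p : A → ℝ) (hp0 : ∀ a, 0 ≤ p a) (hpsum : ∑ a, p a = 1) (hne : p ≠ πstar) :
    ∑ a, p a * q a + (1 - α) * τ * discreteEntropy p - α * τ * discreteKL p μ <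
      ∑ a, πstar a * q a + (1 - α) * τ * discreteEntropy πstar
        - α * τ * discreteKL πstar μ := by
  set Z := ∑ a', μ a' ^ α * Real.exp (q a' / τ) with hZ
  have hterm : ∀ a, 0 < μ a ^ α * Real.exp (q a / τ) := fun a =>
    mul_pos (Real.rpow_pos_of_pos (hμpos a) α) (Real.exp_pos _)
  have hZpos : 0 < Z :=
    Finset.sum_pos (fun a _ => hterm a) Finset.univ_nonempty
  have hπpos : ∀ a, 0 < πstar a := fun a => by
    rw [hπstar a]; exact div_pos (hterm a) hZpos
  have hπsum : ∑ a, πstar a = 1 := by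
    simp only [hπstar]
    rw [← Finset.sum_div, div_self hZpos.ne']
  have hlog : ∀ a, Real.log (πstar a) = α * Real.log (μ a) + q a / τ - Real.log Z := by
    intro a
    rw [hπstar a, Real.log_div (hterm a).ne' hZpos.ne',
      Real.log_mul (Real.rpow_pos_of_pos (hμpos a) α).ne' (Real.exp_pos _).ne',
      Real.log_rpow (hμpos a), Real.log_exp]
  have key : ∀ r : A → ℝ, (∑ a, r a = 1) →
      ∑ a, r a * q a + (1 - α) * τ * discreteEntropy r - α * τ * discreteKL r μ
        = τ * Real.log Z - τ * ∑ a, r a * (Real.log (r a) - Real.log (πstar a)) := by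
    intro r hr
    have h1 : τ * Real.log Z = ∑ a, r a * (τ * Real.log Z) := by
      rw [← Finset.sum_mul, hr, one_mul]
    have lhs_eq : ∑ a, r a * q a + (1 - α) * τ * discreteEntropy r
        - α * τ * discreteKL r μ
        = ∑ a, (r a * q a - (1 - α) * τ * (r a * Real.log (r a))
            - α * τ * (r a * (Real.log (r a) - Real.log (μ a)))) := by
      rw [discreteEntropy, discreteKL, Finset.sum_sub_distrib, Finset.sum_sub_distrib,
        ← Finset.mul_sum, ← Finset.mul_sum]
      ring
    have rhs_eq : τ * Real.log Z - τ * ∑ a, r a * (Real.log (r a) - Real.log (πstar a))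
        = ∑ a, (r a * (τ * Real.log Z)
            - τ * (r a * (Real.log (r a) - Real.log (πstar a)))) := by
      rw [Finset.sum_sub_distrib, ← Finset.mul_sum, ← h1]
    rw [lhs_eq, rhs_eq]
    refine Finset.sum_congr rfl (fun a _ => ?_)
    rw [hlog a]
    have hτne : τ ≠ 0 := hτ.ne'
    field_simp
    ring
  have hKLπ : ∑ a, πstar a * (Real.log (πstar a) - Real.log (πstar a)) = 0 := by
    simp
  have hKLp := gibbs p πstar hp0 hπpos hpsum hπsum hne
  rw [key p hpsum, key πstar hπsum, hKLπ]
  have : 0 < τ * ∑ a, p a * (Real.log (p a) - Real.log (πstar a)) :=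
    mul_pos hτ hKLp
  linarith
end

section
/- Let S and A be finite nonempty sets, τ > 0, α ∈ [0,1), let π_k and π_{k+1} be strictly positive policies, and V_k : S → ℝ. Define the implicit Q-value Q_k(s,a) = τ·ln π_{k+1}(a|s) − α·τ·ln π_k(a|s) + V_k(s). Then for every state s, the distribution π_{k+1}(·|s) maximizes, over all probability distributions p on A, the objective Σ_a p(a)·Q_k(s,a) + (1−α)·τ·H(p) − α·τ·KL(p‖π_k(·|s)). -/
lemma discreteKL_nonneg {A : Type*} [Fintype A] (p μ : A → ℝ)
    (hp : ∀ a, 0 ≤ p a) (hμ : ∀ a, 0 < μ a)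
    (hps : ∑ a, p a = 1) (hμs : ∑ a, μ a = 1) :
    0 ≤ discreteKL p μ := by
  have key : ∀ a, p a - μ a ≤ p a * (Real.log (p a) - Real.log (μ a)) := by
    intro a
    rcases eq_or_lt_of_le (hp a) with h | h
    · simp [← h]; linarith [(hμ a).le]
    · have hlog : Real.log (μ a / p a) ≤ μ a / p a - 1 :=
        Real.log_le_sub_one_of_pos (div_pos (hμ a) h)
      rw [Real.log_div (hμ a).ne' h.ne'] at hlog
      have h2 := mul_le_mul_of_nonneg_left hlog (hp a)
      have h3 : p a * (μ a / p a) = μ a := by field_simp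
      nlinarith
  have hsum : ∑ a, (p a - μ a) ≤ ∑ a, p a * (Real.log (p a) - Real.log (μ a)) :=
    Finset.sum_le_sum (fun a _ => key a)
  rw [Finset.sum_sub_distrib, hps, hμs] at hsum
  simpa [discreteKL] using hsum

/-- with the implicit Q-value
`Q_k(s,a) = τ ln π_{k+1}(a|s) − ατ ln π_k(a|s) + V_k(s)`, the policy `π_{k+1}(·|s)`
maximizes `p ↦ ⟨p, Q_k(s,·)⟩ + (1−α)τ H(p) − ατ KL(p‖π_k(·|s))` over distributions. -/
theorem iq_implicit_q_greedy
    {S A : Type*} [Fintype S] [Fintype A] [Nonempty S] [Nonempty A]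
    (τ α : ℝ) (hτ : 0 < τ) (hα0 : 0 ≤ α) (hα1 : α < 1)
    (πk : S → A → ℝ) (hπkpos : ∀ s a, 0 < πk s a) (hπksum : ∀ s, ∑ a, πk s a = 1)
    (πkp1 : S → A → ℝ) (hπkp1pos : ∀ s a, 0 < πkp1 s a)
    (hπkp1sum : ∀ s, ∑ a, πkp1 s a = 1)
    (Vk : S → ℝ)
    (Qk : S → A → ℝ)
    (hQk : ∀ s a, Qk s a =
      τ * Real.log (πkp1 s a) - α * τ * Real.log (πk s a) + Vk s) :
    ∀ s, ∀ p : A → ℝ, (∀ a, 0 ≤ p a) → (∑ a, p a = 1) →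
      ∑ a, p a * Qk s a + (1 - α) * τ * discreteEntropy p
          - α * τ * discreteKL p (πk s) ≤
        ∑ a, πkp1 s a * Qk s a + (1 - α) * τ * discreteEntropy (πkp1 s)
          - α * τ * discreteKL (πkp1 s) (πk s) := by
  intro s p hp hps
  -- Key identity: objective(q) = Vk s − τ * KL(q ‖ πkp1 s)
  have key : ∀ q : A → ℝ, (∑ a, q a = 1) →
      ∑ a, q a * Qk s a + (1 - α) * τ * discreteEntropy q
        - α * τ * discreteKL q (πk s)
      = Vk s - τ * discreteKL q (πkp1 s) := by
    intro q hqs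
    simp only [discreteEntropy, discreteKL, hQk]
    have e1 : ∑ x, q x * (τ * Real.log (πkp1 s x) - α * τ * Real.log (πk s x) + Vk s)
        = τ * ∑ x, q x * Real.log (πkp1 s x)
          - α * τ * ∑ x, q x * Real.log (πk s x) + Vk s := by
      simp only [mul_sub, mul_add]
      rw [Finset.sum_add_distrib, Finset.sum_sub_distrib, ← Finset.sum_mul, hqs, one_mul]
      congr 1
      congr 1
      · rw [Finset.mul_sum]; exact Finset.sum_congr rfl fun x _ => by ring
      · rw [Finset.mul_sum]; exact Finset.sum_congr rfl fun x _ => by ring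
    have e2 : ∑ a, q a * (Real.log (q a) - Real.log (πk s a))
        = ∑ a, q a * Real.log (q a) - ∑ a, q a * Real.log (πk s a) := by
      simp only [mul_sub]; rw [Finset.sum_sub_distrib]
    have e3 : ∑ a, q a * (Real.log (q a) - Real.log (πkp1 s a))
        = ∑ a, q a * Real.log (q a) - ∑ a, q a * Real.log (πkp1 s a) := by
      simp only [mul_sub]; rw [Finset.sum_sub_distrib]
    rw [e1, e2, e3]
    ring
  rw [key p hps, key (πkp1 s) (hπkp1sum s)]
  have h0 : discreteKL (πkp1 s) (πkp1 s) = 0 := by simp [discreteKL]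
  rw [h0]
  have hKL := discreteKL_nonneg p (πkp1 s) hp (hπkp1pos s) hps (hπkp1sum s)
  nlinarith
end

section
/- Consider a finite MDP with finite nonempty state set S, finite nonempty action set A, transition kernel P, reward r : S×A → ℝ, and γ ∈ [0,1). Let τ > 0, α ∈ [0,1), let π_k, π_{k+1}, π_{k+2} be strictly positive policies, V_k, V_{k+1} : S → ℝ, and ε_{k+1} : S×A → ℝ, and suppose τ·ln π_{k+2}(a|s) + V_{k+1}(s) = r(s,a) + α·τ·ln π_{k+1}(a|s) + γ·(PV_k)(s,a) + ε_{k+1}(s,a) for all (s,a). Define Q_k(s,a) = τ·ln π_{k+1}(a|s) − α·τ·ln π_k(a|s) + V_k(s) and Q_{k+1}(s,a) = τ·ln π_{k+2}(a|s) − α·τ·ln π_{k+1}(a|s) + V_{k+1}(s). Then for all (s,a): Q_{k+1}(s,a) = r(s,a) + γ·Σ_{s'} P(s'|s,a)·( Σ_{a'} π_{k+1}(a'|s')·Q_k(s',a') + (1−α)·τ·H(π_{k+1}(·|s')) − α·τ·KL(π_{k+1}(·|s')‖π_k(·|s')) ) + ε_{k+1}(s,a). -/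
/-- the approximate IQ-DP update, rewritten on the implicit Q-values
`Q_k = τ ln π_{k+1} − ατ ln π_k + V_k`, is exactly the MD-VI evaluation step with
entropy and KL regularization, up to the error `ε_{k+1}`. -/
theorem iq_dp_implicit_q_mdvi_step
    {S A : Type*} [Fintype S] [Fintype A] [Nonempty S] [Nonempty A]
    (P : S → A → S → ℝ) (hP0 : ∀ s a s', 0 ≤ P s a s')
    (hPsum : ∀ s a, ∑ s', P s a s' = 1)
    (r : S → A → ℝ) (γ : ℝ) (hγ0 : 0 ≤ γ) (hγ1 : γ < 1)
    (τ α : ℝ) (hτ : 0 < τ) (hα0 : 0 ≤ α) (hα1 : α < 1)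
    (πk πkp1 πkp2 : S → A → ℝ)
    (hπkpos : ∀ s a, 0 < πk s a) (hπksum : ∀ s, ∑ a, πk s a = 1)
    (hπkp1pos : ∀ s a, 0 < πkp1 s a) (hπkp1sum : ∀ s, ∑ a, πkp1 s a = 1)
    (hπkp2pos : ∀ s a, 0 < πkp2 s a) (hπkp2sum : ∀ s, ∑ a, πkp2 s a = 1)
    (Vk Vkp1 : S → ℝ) (ε : S → A → ℝ)
    (hIQ : ∀ s a, τ * Real.log (πkp2 s a) + Vkp1 s =
      r s a + α * τ * Real.log (πkp1 s a) + γ * (∑ s', P s a s' * Vk s') + ε s a)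
    (Qk Qkp1 : S → A → ℝ)
    (hQk : ∀ s a, Qk s a =
      τ * Real.log (πkp1 s a) - α * τ * Real.log (πk s a) + Vk s)
    (hQkp1 : ∀ s a, Qkp1 s a =
      τ * Real.log (πkp2 s a) - α * τ * Real.log (πkp1 s a) + Vkp1 s) :
    ∀ s a, Qkp1 s a =
      r s a + γ * (∑ s', P s a s' *
        (∑ a', πkp1 s' a' * Qk s' a'
          + (1 - α) * τ * discreteEntropy (πkp1 s')
          - α * τ * discreteKL (πkp1 s') (πk s'))) + ε s a := by
  intro s a
  have key : ∀ s' : S, (∑ a', πkp1 s' a' * Qk s' a'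
      + (1 - α) * τ * discreteEntropy (πkp1 s')
      - α * τ * discreteKL (πkp1 s') (πk s')) = Vk s' := by
    intro s'
    simp only [discreteEntropy, discreteKL, hQk]
    have h1 : ∑ a', πkp1 s' a' * (τ * Real.log (πkp1 s' a')
        - α * τ * Real.log (πk s' a') + Vk s')
        = τ * ∑ a', πkp1 s' a' * Real.log (πkp1 s' a')
          - α * τ * ∑ a', πkp1 s' a' * Real.log (πk s' a')
          + Vk s' := by
      have e : ∀ x ∈ Finset.univ, πkp1 s' x * (τ * Real.log (πkp1 s' x)
          - α * τ * Real.log (πk s' x) + Vk s')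
          = τ * (πkp1 s' x * Real.log (πkp1 s' x))
            - α * τ * (πkp1 s' x * Real.log (πk s' x)) + πkp1 s' x * Vk s' := by
        intros; ring
      rw [Finset.sum_congr rfl e, Finset.sum_add_distrib, Finset.sum_sub_distrib,
        ← Finset.mul_sum, ← Finset.mul_sum, ← Finset.sum_mul, hπkp1sum, one_mul]
    have h2 : ∑ a', πkp1 s' a' * (Real.log (πkp1 s' a') - Real.log (πk s' a'))
        = ∑ a', πkp1 s' a' * Real.log (πkp1 s' a')
          - ∑ a', πkp1 s' a' * Real.log (πk s' a') := by
      rw [← Finset.sum_sub_distrib]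
      apply Finset.sum_congr rfl; intro x _; ring
    rw [h1, h2]; ring
  have hsum : ∑ s', P s a s' *
      (∑ a', πkp1 s' a' * Qk s' a'
        + (1 - α) * τ * discreteEntropy (πkp1 s')
        - α * τ * discreteKL (πkp1 s') (πk s')) = ∑ s', P s a s' * Vk s' := by
    apply Finset.sum_congr rfl; intro s' _; rw [key s']
  rw [hQkp1, hsum]
  have := hIQ s a
  linarith
end

section
/- Consider a finite MDP with finite nonempty state set S, finite nonempty action set A, transition kernel P, bounded reward r : S×A → ℝ, and γ ∈ [0,1). Let τ > 0, α ∈ (0,1), set λ = (1−α)·τ, and let (π_k)_{k≥1} be a sequence of strictly positive policies and (V_k)_{k≥0} a sequence of functions S → ℝ. For k ≥ 1 define the error ε_k(s,a) = τ·ln π_{k+1}(a|s) + V_k(s) − (r(s,a) + α·τ·ln π_k(a|s) + γ·(PV_{k−1})(s,a)) and the moving average E_k = (1−α)·Σ_{j=1}^{k} α^{k−j}·ε_j. Let Q_*^λ : S×A → ℝ satisfy Q_*^λ(s,a) = r(s,a) + γ·Σ_{s'} P(s'|s,a)·λ·ln Σ_{a'} exp(Q_*^λ(s',a')/λ) for all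 (s,a), and for each k let Q_{π_k}^λ : S×A → ℝ satisfy Q_{π_k}^λ(s,a) = r(s,a) + γ·Σ_{s'} P(s'|s,a)·Σ_{a'} π_k(a'|s')·(Q_{π_k}^λ(s',a') − λ·ln π_k(a'|s')) for all (s,a). Then there exists a sequence of reals (u_k)_{k≥1} with lim_{k→∞} k·u_k = 0 such that for all k ≥ 1: ‖Q_*^λ − Q_{π_k}^λ‖_∞ ≤ (2/(1−γ)^2)·( (1−γ)·Σ_{j=1}^{k} γ^{k−j}·‖E_j‖_∞ ) + u_k. -/
open Finset Filter Topology
open scoped NNReal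

/-!
Let `v k` be the `α`-moving average of the `V j` and `Qh k = λ ln π (k+1) + v k` the implicit
Q-function. Since `π (k+1)` is its softmax policy, `logSumExp λ (Qh k) = v k`, so the optimal and
the `π (k+1)`-Bellman operators agree at `Qh k`. The IQ-DP update then reads
`Qh (k+1) = T (Qh k) + E (k+1) + α ^ k • ρ` for a fixed `ρ`: inexact value iteration for the
`γ`-contraction `T`, whence
`‖Qh k - Q*‖ ≤ γ ^ k ‖Qh 0 - Q*‖ + ∑ j, γ ^ (k - j) (‖E j‖ + α ^ (j - 1) ‖ρ‖)`.
As the two `γ`-contractions agree at `Qh k`, their fixed points satisfy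
`(1 - γ)‖Q* - Q_{π (k+1)}‖ ≤ 2γ ‖Qh k - Q*‖`; all terms not involving `E` are
`O(k max(γ, α) ^ k)`.
-/

theorem sum_Icc_pow_smul_succ {R M : Type*} [CommSemiring R] [AddCommMonoid M] [Module R M]
    (c : R) (b : ℕ → M) (k : ℕ) :
    ∑ j ∈ Icc 1 (k + 1), c ^ (k + 1 - j) • b j
      = c • ∑ j ∈ Icc 1 k, c ^ (k - j) • b j + b (k + 1) := by
  rw [sum_Icc_succ_top (Nat.le_add_left 1 k), Nat.sub_self, pow_zero, one_smul, smul_sum]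
  congr 1
  refine sum_congr rfl fun j hj => ?_
  rw [Nat.sub_add_comm (mem_Icc.1 hj).2, pow_succ', mul_smul]

theorem abs_sum_mul_le_of_sum_eq_one {ι : Type*} [Fintype ι] {w f : ι → ℝ} {c : ℝ}
    (hw0 : ∀ i, 0 ≤ w i) (hw1 : ∑ i, w i = 1) (hf : ∀ i, |f i| ≤ c) :
    |∑ i, w i * f i| ≤ c :=
  calc |∑ i, w i * f i| ≤ ∑ i, w i * |f i| := by
        simpa only [abs_mul, abs_of_nonneg (hw0 _)]
          using abs_sum_le_sum_abs (fun i => w i * f i) univ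
    _ ≤ ∑ i, w i * c := sum_le_sum fun i _ => mul_le_mul_of_nonneg_left (hf i) (hw0 i)
    _ = c := by rw [← sum_mul, hw1, one_mul]

theorem mul_log_sum_exp_div_le {ι : Type*} [Fintype ι] [Nonempty ι] {lam : ℝ} (hlam : 0 < lam)
    {f g : ι → ℝ} {c : ℝ} (h : ∀ i, f i ≤ g i + c) :
    lam * Real.log (∑ i, Real.exp (f i / lam))
      ≤ lam * Real.log (∑ i, Real.exp (g i / lam)) + c := by
  have hg : 0 < ∑ i, Real.exp (g i / lam) := sum_pos (fun i _ => Real.exp_pos _) univ_nonempty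
  have hle : ∑ i, Real.exp (f i / lam) ≤ Real.exp (c / lam) * ∑ i, Real.exp (g i / lam) := by
    rw [mul_sum]
    refine sum_le_sum fun i _ => ?_
    rw [← Real.exp_add, Real.exp_le_exp, ← add_div]
    gcongr
    linarith [h i]
  have hlog := Real.log_le_log (sum_pos (fun i _ => Real.exp_pos _) univ_nonempty) hle
  rw [Real.log_mul (Real.exp_ne_zero _) hg.ne', Real.log_exp] at hlog
  calc lam * Real.log (∑ i, Real.exp (f i / lam))
      ≤ lam * (c / lam + Real.log (∑ i, Real.exp (g i / lam))) := by gcongr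
    _ = _ := by field_simp; ring

theorem mul_sum_pow_mul_pow_le {γ α : ℝ} (hγ : 0 ≤ γ) (hα : 0 ≤ α) (m : ℕ) :
    γ * ∑ j ∈ Icc 1 m, γ ^ (m - j) * α ^ (j - 1) ≤ m * max γ α ^ m := by
  calc γ * ∑ j ∈ Icc 1 m, γ ^ (m - j) * α ^ (j - 1)
      ≤ ∑ _j ∈ Icc 1 m, max γ α ^ m := by
        rw [mul_sum]
        refine sum_le_sum fun j hj => ?_
        have hexp : m = 1 + (m - j) + (j - 1) := by have := mem_Icc.1 hj; omega
        calc γ * (γ ^ (m - j) * α ^ (j - 1)) = γ ^ 1 * γ ^ (m - j) * α ^ (j - 1) := by ring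
          _ ≤ max γ α ^ 1 * max γ α ^ (m - j) * max γ α ^ (j - 1) := by
            gcongr
            exacts [le_max_left γ α, le_max_left γ α, le_max_right γ α]
          _ = max γ α ^ m := by rw [← pow_add, ← pow_add, ← hexp]
    _ = m * max γ α ^ m := by simp

theorem le_geom_sum_add_remainder {γ α M D x y : ℝ} {e : ℕ → ℝ} {m : ℕ}
    (hγ0 : 0 ≤ γ) (hγ1 : γ < 1) (hα0 : 0 ≤ α) (hM : 0 ≤ M) (hD : 0 ≤ D) (he : ∀ j, 0 ≤ e j)
    (hx : (1 - γ) * x ≤ 2 * γ * y)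
    (hy : y ≤ γ ^ m * M + ∑ j ∈ Icc 1 m, γ ^ (m - j) * (e j + α ^ (j - 1) * D)) :
    x ≤ 2 / (1 - γ) ^ 2 * ((1 - γ) * ∑ j ∈ Icc 1 (m + 1), γ ^ (m + 1 - j) * e j)
      + 2 / (1 - γ) * (M + D) * (((m + 1 : ℕ) : ℝ) * max γ α ^ (m + 1 - 1)) := by
  set β := max γ α
  set SE := ∑ j ∈ Icc 1 (m + 1), γ ^ (m + 1 - j) * e j
  have hsplit : ∑ j ∈ Icc 1 m, γ ^ (m - j) * (e j + α ^ (j - 1) * D)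
      = ∑ j ∈ Icc 1 m, γ ^ (m - j) * e j + D * ∑ j ∈ Icc 1 m, γ ^ (m - j) * α ^ (j - 1) := by
    rw [mul_sum, ← sum_add_distrib]
    exact sum_congr rfl fun _ _ => by ring
  have hSE : γ * ∑ j ∈ Icc 1 m, γ ^ (m - j) * e j ≤ SE := by
    have h := sum_Icc_pow_smul_succ γ e m
    simp only [smul_eq_mul] at h
    linarith [he (m + 1)]
  have hconv := mul_sum_pow_mul_pow_le hγ0 hα0 m
  have hγm : γ * γ ^ m ≤ β ^ m :=
    calc γ * γ ^ m ≤ γ ^ m := mul_le_of_le_one_left (by positivity) hγ1.le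
      _ ≤ β ^ m := pow_le_pow_left₀ hγ0 (le_max_left γ α) m
  have hβm : 0 ≤ β ^ m := pow_nonneg (hγ0.trans (le_max_left γ α)) m
  have hkey : (1 - γ) * x ≤ 2 * SE + 2 * (M + D) * ((m + 1) * β ^ m) := by
    rw [hsplit] at hy
    nlinarith [mul_le_mul_of_nonneg_left hy hγ0, mul_le_mul_of_nonneg_left hγm hM,
      mul_le_mul_of_nonneg_left hconv hD, mul_nonneg hM hβm, mul_nonneg (mul_nonneg hM hβm)
      (Nat.cast_nonneg m : (0 : ℝ) ≤ m)]
  have h1γ : 0 < 1 - γ := sub_pos.2 hγ1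
  rw [Nat.add_sub_cancel, Nat.cast_succ]
  calc x ≤ (2 * SE + 2 * (M + D) * ((m + 1) * β ^ m)) / (1 - γ) := (le_div_iff₀' h1γ).2 hkey
    _ = _ := by field_simp

theorem tendsto_natCast_mul_natCast_mul_pow_pred {β : ℝ} (hβ0 : 0 ≤ β) (hβ1 : β < 1) :
    Tendsto (fun k : ℕ => (k : ℝ) * (k * β ^ (k - 1))) atTop (𝓝 0) := by
  have hβ : |β| < 1 := by rwa [abs_of_nonneg hβ0]
  rw [← tendsto_add_atTop_iff_nat 1]
  have h := ((tendsto_pow_const_mul_const_pow_of_abs_lt_one 2 hβ).add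
    ((tendsto_pow_const_mul_const_pow_of_abs_lt_one 1 hβ).const_mul 2)).add
    (tendsto_pow_const_mul_const_pow_of_abs_lt_one 0 hβ)
  simp only [mul_zero, add_zero] at h
  refine h.congr fun m => ?_
  push_cast
  ring

section Contraction

variable {X : Type*} [PseudoMetricSpace X] {K : ℝ≥0} {T : X → X}

theorem LipschitzWith.dist_inexact_iterate_le (hT : LipschitzWith K T) {x₀ : X}
    (hx₀ : T x₀ = x₀) (x : ℕ → X) (b : ℕ → ℝ)
    (hb : ∀ k, dist (x (k + 1)) (T (x k)) ≤ b (k + 1)) (k : ℕ) :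
    dist (x k) x₀ ≤ K ^ k * dist (x 0) x₀ + ∑ j ∈ Icc 1 k, (K : ℝ) ^ (k - j) * b j := by
  induction k with
  | zero => simp
  | succ k ih =>
    have hstep : dist (x (k + 1)) x₀ ≤ b (k + 1) + K * dist (x k) x₀ :=
      calc dist (x (k + 1)) x₀ ≤ dist (x (k + 1)) (T (x k)) + dist (T (x k)) (T x₀) := by
            simpa only [hx₀] using dist_triangle _ _ _
        _ ≤ _ := add_le_add (hb k) (hT.dist_le_mul _ _)
    have hsum := sum_Icc_pow_smul_succ (K : ℝ) b k
    simp only [smul_eq_mul] at hsum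
    rw [hsum, pow_succ']
    nlinarith [mul_le_mul_of_nonneg_left ih K.2]

theorem LipschitzWith.dist_fixedPoints_le_of_eq {T' : X → X} (hT : LipschitzWith K T)
    (hT' : LipschitzWith K T') {x y z : X} (hx : T x = x) (hy : T' y = y) (hz : T' z = T z) :
    (1 - K) * dist x y ≤ 2 * K * dist z x :=
  have : dist x y ≤ K * dist x z + K * dist z y :=
    calc dist x y ≤ dist (T x) (T z) + dist (T' z) (T' y) := by
          simpa only [hx, hy, hz] using dist_triangle _ _ _
      _ ≤ _ := add_le_add (hT.dist_le_mul _ _) (hT'.dist_le_mul _ _)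
  by nlinarith [dist_triangle z x y, dist_comm x z, K.2]

end Contraction

section MovingAverage

variable {R M : Type*} [CommRing R] [AddCommMonoid M] [Module R M]

def movingAvg (α : R) (x : ℕ → M) (k : ℕ) : M :=
  (1 - α) • ∑ j ∈ Icc 1 k, α ^ (k - j) • x j

theorem movingAvg_succ (α : R) (x : ℕ → M) (k : ℕ) :
    movingAvg α x (k + 1) = α • movingAvg α x k + (1 - α) • x (k + 1) := by
  rw [movingAvg, sum_Icc_pow_smul_succ, smul_add, movingAvg, smul_comm]

end MovingAverage

namespace RegularizedMDP

variable {S A : Type*}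

noncomputable def logSumExp [Fintype A] (lam : ℝ) (Q : S × A → ℝ) (s : S) : ℝ :=
  lam * Real.log (∑ a, Real.exp (Q (s, a) / lam))

noncomputable def policyValue [Fintype A] (lam : ℝ) (π : S → A → ℝ) (Q : S × A → ℝ) (s : S) : ℝ :=
  ∑ a, π s a * (Q (s, a) - lam * Real.log (π s a))

/-- `F` turns a Q-function into a state value: `logSumExp lam` gives the optimal regularized
Bellman operator, `policyValue lam π` the one of the policy `π`. -/
def bellman [Fintype S] (P : S → A → S → ℝ) (r : S → A → ℝ) (γ : ℝ) (F : (S × A → ℝ) → S → ℝ)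
    (Q : S × A → ℝ) : S × A → ℝ :=
  fun p => r p.1 p.2 + γ * ∑ s', P p.1 p.2 s' * F Q s'

theorem lipschitzWith_logSumExp [Fintype S] [Fintype A] [Nonempty A] {lam : ℝ} (hlam : 0 < lam) :
    LipschitzWith 1 (logSumExp (S := S) (A := A) lam) := by
  refine LipschitzWith.of_dist_le_mul fun Q Q' => ?_
  rw [NNReal.coe_one, one_mul, dist_pi_le_iff dist_nonneg]
  intro s
  have hQ : ∀ a, |Q (s, a) - Q' (s, a)| ≤ dist Q Q' := fun a => dist_le_pi_dist Q Q' (s, a)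
  rw [Real.dist_eq, abs_le]
  unfold logSumExp
  constructor
  · linarith [mul_log_sum_exp_div_le hlam (c := dist Q Q') (f := fun a => Q' (s, a))
      (g := fun a => Q (s, a)) fun a => by linarith [(abs_le.1 (hQ a)).1]]
  · linarith [mul_log_sum_exp_div_le hlam (c := dist Q Q') (f := fun a => Q (s, a))
      (g := fun a => Q' (s, a)) fun a => by linarith [(abs_le.1 (hQ a)).2]]

theorem lipschitzWith_policyValue [Fintype S] [Fintype A] {lam : ℝ} {π : S → A → ℝ}
    (hπ0 : ∀ s a, 0 ≤ π s a) (hπ1 : ∀ s, ∑ a, π s a = 1) : LipschitzWith 1 (policyValue lam π) := by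
  refine LipschitzWith.of_dist_le_mul fun Q Q' => ?_
  rw [NNReal.coe_one, one_mul, dist_pi_le_iff dist_nonneg]
  intro s
  have hdiff : policyValue lam π Q s - policyValue lam π Q' s
      = ∑ a, π s a * (Q (s, a) - Q' (s, a)) := by
    simp only [policyValue, ← sum_sub_distrib]
    exact sum_congr rfl fun a _ => by ring
  rw [Real.dist_eq, hdiff]
  exact abs_sum_mul_le_of_sum_eq_one (hπ0 s) (hπ1 s) fun a => dist_le_pi_dist Q Q' (s, a)

theorem lipschitzWith_bellman [Fintype S] [Fintype A] {P : S → A → S → ℝ}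
    (hP0 : ∀ s a s', 0 ≤ P s a s') (hP1 : ∀ s a, ∑ s', P s a s' = 1) (r : S → A → ℝ) {γ : ℝ}
    (hγ : 0 ≤ γ) {F : (S × A → ℝ) → S → ℝ} (hF : LipschitzWith 1 F) :
    LipschitzWith γ.toNNReal (bellman P r γ F) := by
  refine LipschitzWith.of_dist_le_mul fun Q Q' => ?_
  rw [Real.coe_toNNReal γ hγ, dist_pi_le_iff (by positivity)]
  intro p
  have hdiff : bellman P r γ F Q p - bellman P r γ F Q' p
      = γ * ∑ s', P p.1 p.2 s' * (F Q s' - F Q' s') := by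
    simp only [bellman, mul_sub, sum_sub_distrib]
    ring
  have hFQ : ∀ s', |F Q s' - F Q' s'| ≤ dist Q Q' := fun s' =>
    (dist_le_pi_dist (F Q) (F Q') s').trans (by simpa using hF.dist_le_mul Q Q')
  rw [Real.dist_eq, hdiff, abs_mul, abs_of_nonneg hγ]
  gcongr
  exact abs_sum_mul_le_of_sum_eq_one (hP0 p.1 p.2) (hP1 p.1 p.2) hFQ

section Greedy

variable [Fintype A] {lam : ℝ} {π : S → A → ℝ} {Q : S × A → ℝ} {v : S → ℝ}

theorem logSumExp_eq_of_log_eq (hlam : lam ≠ 0) (hπ0 : ∀ s a, 0 < π s a)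
    (hπ1 : ∀ s, ∑ a, π s a = 1) (h : ∀ s a, lam * Real.log (π s a) = Q (s, a) - v s) :
    logSumExp lam Q = v := by
  funext s
  have hexp : ∀ a, Real.exp (Q (s, a) / lam) = Real.exp (v s / lam) * π s a := fun a => by
    rw [← Real.exp_log (hπ0 s a), ← Real.exp_add]
    congr 1
    field_simp
    linarith [h s a]
  simp only [logSumExp, hexp, ← mul_sum, hπ1 s, mul_one, Real.log_exp]
  field_simp

theorem policyValue_eq_of_log_eq (hπ1 : ∀ s, ∑ a, π s a = 1)
    (h : ∀ s a, lam * Real.log (π s a) = Q (s, a) - v s) : policyValue lam π Q = v := by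
  funext s
  simp only [policyValue, h, sub_sub_cancel, ← sum_mul, hπ1 s, one_mul]

theorem one_sub_mul_norm_sub_le_of_log_eq [Fintype S] [Nonempty A] {P : S → A → S → ℝ}
    (hP0 : ∀ s a s', 0 ≤ P s a s') (hP1 : ∀ s a, ∑ s', P s a s' = 1) {r : S → A → ℝ} {γ : ℝ}
    (hγ : 0 ≤ γ) (hlam : 0 < lam) (hπ0 : ∀ s a, 0 < π s a) (hπ1 : ∀ s, ∑ a, π s a = 1)
    (h : ∀ s a, lam * Real.log (π s a) = Q (s, a) - v s) {Qstar Qπ : S × A → ℝ}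
    (hQstar : bellman P r γ (logSumExp lam) Qstar = Qstar)
    (hQπ : bellman P r γ (policyValue lam π) Qπ = Qπ) :
    (1 - γ) * ‖Qstar - Qπ‖ ≤ 2 * γ * ‖Q - Qstar‖ := by
  have hT := lipschitzWith_bellman hP0 hP1 r hγ (lipschitzWith_logSumExp (S := S) hlam)
  have hTπ := lipschitzWith_bellman hP0 hP1 r hγ
    (lipschitzWith_policyValue (lam := lam) (fun s a => (hπ0 s a).le) hπ1)
  have hagree : bellman P r γ (policyValue lam π) Q = bellman P r γ (logSumExp lam) Q := by
    unfold bellman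
    rw [policyValue_eq_of_log_eq hπ1 h, logSumExp_eq_of_log_eq hlam.ne' hπ0 hπ1 h]
  simpa only [Real.coe_toNNReal γ hγ, dist_eq_norm]
    using hT.dist_fixedPoints_le_of_eq hTπ hQstar hQπ hagree

end Greedy

noncomputable def implicitQ (lam : ℝ) (π : ℕ → S → A → ℝ) (v : ℕ → S → ℝ) (k : ℕ) :
    S × A → ℝ :=
  fun p => lam * Real.log (π (k + 1) p.1 p.2) + v k p.1

variable {P : S → A → S → ℝ} {r : S → A → ℝ} {γ τ α lam : ℝ} {π : ℕ → S → A → ℝ}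
  {V : ℕ → S → ℝ} {ε : ℕ → S × A → ℝ}

theorem implicitQ_succ [Fintype S] (hlam : lam = (1 - α) * τ)
    (hε : ∀ k ≥ 1, ∀ s a, ε k (s, a) =
      τ * Real.log (π (k + 1) s a) + V k s -
        (r s a + α * τ * Real.log (π k s a) + γ * ∑ s', P s a s' * V (k - 1) s'))
    (k : ℕ) :
    implicitQ lam π (movingAvg α V) (k + 1) = α • implicitQ lam π (movingAvg α V) k +
      (1 - α) • fun p => r p.1 p.2 + γ * ∑ s', P p.1 p.2 s' * V k s' + ε (k + 1) p := by
  ext ⟨s, a⟩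
  have hv := congrFun (movingAvg_succ α V k) s
  have hεk := hε (k + 1) (Nat.le_add_left 1 k) s a
  simp only [Pi.add_apply, Pi.smul_apply, smul_eq_mul, Nat.add_sub_cancel] at hv hεk
  simp only [implicitQ, Pi.add_apply, Pi.smul_apply, smul_eq_mul, hv, hlam]
  linear_combination (α - 1) * hεk

theorem implicitQ_sub_bellman_succ [Fintype S] [Fintype A] (hlam : lam = (1 - α) * τ)
    (hε : ∀ k ≥ 1, ∀ s a, ε k (s, a) =
      τ * Real.log (π (k + 1) s a) + V k s -
        (r s a + α * τ * Real.log (π k s a) + γ * ∑ s', P s a s' * V (k - 1) s'))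
    (hsoft : ∀ k, logSumExp lam (implicitQ lam π (movingAvg α V) k) = movingAvg α V k) (k : ℕ) :
    implicitQ lam π (movingAvg α V) (k + 1) - movingAvg α ε (k + 1)
        - bellman P r γ (logSumExp lam) (implicitQ lam π (movingAvg α V) k)
      = α ^ k • (implicitQ lam π (movingAvg α V) 1 - movingAvg α ε 1
        - bellman P r γ (logSumExp lam) (implicitQ lam π (movingAvg α V) 0)) := by
  induction k with
  | zero => simp
  | succ k ih =>
    rw [pow_succ', mul_smul, ← ih]
    ext ⟨s, a⟩
    have hQ := congrFun (implicitQ_succ hlam hε (k + 1)) (s, a)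
    have hE := congrFun (movingAvg_succ α ε (k + 1)) (s, a)
    have hPv : ∑ s', P s a s' * movingAvg α V (k + 1) s'
        = α * ∑ s', P s a s' * movingAvg α V k s' + (1 - α) * ∑ s', P s a s' * V (k + 1) s' := by
      rw [mul_sum, mul_sum, ← sum_add_distrib]
      refine sum_congr rfl fun s' _ => ?_
      rw [movingAvg_succ]
      simp only [Pi.add_apply, Pi.smul_apply, smul_eq_mul]
      ring
    simp only [Pi.add_apply, Pi.sub_apply, Pi.smul_apply, smul_eq_mul] at hQ hE ⊢
    simp only [bellman, hsoft, hPv, hQ, hE]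
    ring

theorem dist_implicitQ_succ_bellman_le [Fintype S] [Fintype A] (hα : 0 ≤ α)
    (hlam : lam = (1 - α) * τ)
    (hε : ∀ k ≥ 1, ∀ s a, ε k (s, a) =
      τ * Real.log (π (k + 1) s a) + V k s -
        (r s a + α * τ * Real.log (π k s a) + γ * ∑ s', P s a s' * V (k - 1) s'))
    (hsoft : ∀ k, logSumExp lam (implicitQ lam π (movingAvg α V) k) = movingAvg α V k) (k : ℕ) :
    dist (implicitQ lam π (movingAvg α V) (k + 1))
        (bellman P r γ (logSumExp lam) (implicitQ lam π (movingAvg α V) k))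
      ≤ ‖movingAvg α ε (k + 1)‖ + α ^ k * ‖implicitQ lam π (movingAvg α V) 1 - movingAvg α ε 1
        - bellman P r γ (logSumExp lam) (implicitQ lam π (movingAvg α V) 0)‖ := by
  rw [dist_eq_norm, ← sub_add_cancel (_ - _) (movingAvg α ε (k + 1)), sub_right_comm,
    implicitQ_sub_bellman_succ hlam hε hsoft k, add_comm]
  refine (norm_add_le _ _).trans_eq ?_
  rw [norm_smul, Real.norm_of_nonneg (pow_nonneg hα k)]

end RegularizedMDP

open RegularizedMDP

theorem iq_dp_error_propagation_general_general
    {S A : Type*} [Fintype S] [Fintype A] [Nonempty A]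
    (P : S → A → S → ℝ) (hP0 : ∀ s a s', 0 ≤ P s a s')
    (hPsum : ∀ s a, ∑ s', P s a s' = 1)
    (r : S → A → ℝ) (γ : ℝ) (hγ0 : 0 ≤ γ) (hγ1 : γ < 1)
    (τ α : ℝ) (hτ : 0 < τ) (hα0 : 0 < α) (hα1 : α < 1)
    (lam : ℝ) (hlam : lam = (1 - α) * τ)
    (π : ℕ → S → A → ℝ)
    (hπpos : ∀ k ≥ 1, ∀ s a, 0 < π k s a)
    (hπsum : ∀ k ≥ 1, ∀ s, ∑ a, π k s a = 1)
    (V : ℕ → S → ℝ)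
    (ε : ℕ → S × A → ℝ)
    (hε : ∀ k ≥ 1, ∀ s a, ε k (s, a) =
      τ * Real.log (π (k + 1) s a) + V k s -
        (r s a + α * τ * Real.log (π k s a) + γ * ∑ s', P s a s' * V (k - 1) s'))
    (E : ℕ → S × A → ℝ)
    (hE : ∀ k, E k = (1 - α) • ∑ j ∈ Finset.Icc 1 k, (α ^ (k - j)) • ε j)
    (Qstar : S × A → ℝ)
    (hQstar : ∀ s a, Qstar (s, a) = r s a + γ * ∑ s', P s a s' *
      (lam * Real.log (∑ a', Real.exp (Qstar (s', a') / lam))))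
    (Qpi : ℕ → S × A → ℝ)
    (hQpi : ∀ k ≥ 1, ∀ s a, Qpi k (s, a) = r s a + γ * ∑ s', P s a s' *
      ∑ a', π k s' a' * (Qpi k (s', a') - lam * Real.log (π k s' a'))) :
    ∃ u : ℕ → ℝ,
      Filter.Tendsto (fun k : ℕ => (k : ℝ) * u k) Filter.atTop (nhds 0) ∧
      ∀ k ≥ 1, ‖Qstar - Qpi k‖ ≤
        (2 / (1 - γ) ^ 2) *
          ((1 - γ) * ∑ j ∈ Finset.Icc 1 k, γ ^ (k - j) * ‖E j‖) + u k := by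
  have hlam0 : 0 < lam := hlam ▸ mul_pos (sub_pos.2 hα1) hτ
  obtain rfl : E = movingAvg α ε := funext hE
  set Qh := implicitQ lam π (movingAvg α V)
  set T := bellman P r γ (logSumExp lam)
  have hlog : ∀ m s a, lam * Real.log (π (m + 1) s a) = Qh m (s, a) - movingAvg α V m s :=
    fun m s a => by simp [Qh, implicitQ]
  have hsoft : ∀ m, logSumExp lam (Qh m) = movingAvg α V m := fun m =>
    logSumExp_eq_of_log_eq hlam0.ne' (hπpos (m + 1) (by omega)) (hπsum (m + 1) (by omega)) (hlog m)
  have hfix : T Qstar = Qstar := funext fun p => (hQstar p.1 p.2).symm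
  set D := ‖Qh 1 - movingAvg α ε 1 - T (Qh 0)‖
  have hiter := (lipschitzWith_bellman hP0 hPsum r hγ0 (lipschitzWith_logSumExp hlam0)
    ).dist_inexact_iterate_le hfix Qh (fun j => ‖movingAvg α ε j‖ + α ^ (j - 1) * D)
    fun k => by simpa only [Nat.add_sub_cancel]
      using dist_implicitQ_succ_bellman_le hα0.le hlam hε hsoft k
  refine ⟨fun k => 2 / (1 - γ) * (‖Qh 0 - Qstar‖ + D) * (k * max γ α ^ (k - 1)), ?_, ?_⟩
  · have h := (tendsto_natCast_mul_natCast_mul_pow_pred (le_max_of_le_left hγ0)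
      (max_lt hγ1 hα1)).const_mul (2 / (1 - γ) * (‖Qh 0 - Qstar‖ + D))
    rw [mul_zero] at h
    exact h.congr fun k => by ring
  · intro k hk
    obtain ⟨m, rfl⟩ := Nat.exists_eq_add_of_le' hk
    have hQπ : bellman P r γ (policyValue lam (π (m + 1))) (Qpi (m + 1)) = Qpi (m + 1) :=
      funext fun p => (hQpi (m + 1) hk p.1 p.2).symm
    exact le_geom_sum_add_remainder hγ0 hγ1 hα0.le (norm_nonneg _) (norm_nonneg _)
      (fun j => norm_nonneg _) (one_sub_mul_norm_sub_le_of_log_eq hP0 hPsum hγ0 hlam0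
        (hπpos (m + 1) hk) (hπsum (m + 1) hk) (hlog m) hfix hQπ)
      (by simpa [Real.coe_toNNReal γ hγ0, dist_eq_norm] using hiter m)

/-- Theorem 2, case 0 < α < 1: error propagation bound for IQ-DP with
both entropy and KL regularization. Here functions `S × A → ℝ` carry the sup norm
(the `Pi` norm on a finite type), `λ = (1−α)τ`, and `E_k` is the moving average
`(1−α) Σ_{j=1}^k α^{k−j} ε_j` of the errors. -/
theorem iq_dp_error_propagation_general
    {S A : Type*} [Fintype S] [Fintype A] [Nonempty S] [Nonempty A]
    (P : S → A → S → ℝ) (hP0 : ∀ s a s', 0 ≤ P s a s')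
    (hPsum : ∀ s a, ∑ s', P s a s' = 1)
    (r : S → A → ℝ) (γ : ℝ) (hγ0 : 0 ≤ γ) (hγ1 : γ < 1)
    (τ α : ℝ) (hτ : 0 < τ) (hα0 : 0 < α) (hα1 : α < 1)
    (lam : ℝ) (hlam : lam = (1 - α) * τ)
    (π : ℕ → S → A → ℝ)
    (hπpos : ∀ k ≥ 1, ∀ s a, 0 < π k s a)
    (hπsum : ∀ k ≥ 1, ∀ s, ∑ a, π k s a = 1)
    (V : ℕ → S → ℝ)
    (ε : ℕ → S × A → ℝ)
    (hε : ∀ k ≥ 1, ∀ s a, ε k (s, a) =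
      τ * Real.log (π (k + 1) s a) + V k s -
        (r s a + α * τ * Real.log (π k s a) + γ * ∑ s', P s a s' * V (k - 1) s'))
    (E : ℕ → S × A → ℝ)
    (hE : ∀ k, E k = (1 - α) • ∑ j ∈ Finset.Icc 1 k, (α ^ (k - j)) • ε j)
    (Qstar : S × A → ℝ)
    (hQstar : ∀ s a, Qstar (s, a) = r s a + γ * ∑ s', P s a s' *
      (lam * Real.log (∑ a', Real.exp (Qstar (s', a') / lam))))
    (Qpi : ℕ → S × A → ℝ)
    (hQpi : ∀ k ≥ 1, ∀ s a, Qpi k (s, a) = r s a + γ * ∑ s', P s a s' *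
      ∑ a', π k s' a' * (Qpi k (s', a') - lam * Real.log (π k s' a'))) :
    ∃ u : ℕ → ℝ,
      Filter.Tendsto (fun k : ℕ => (k : ℝ) * u k) Filter.atTop (nhds 0) ∧
      ∀ k ≥ 1, ‖Qstar - Qpi k‖ ≤
        (2 / (1 - γ) ^ 2) *
          ((1 - γ) * ∑ j ∈ Finset.Icc 1 k, γ ^ (k - j) * ‖E j‖) + u k :=
  iq_dp_error_propagation_general_general P hP0 hPsum r γ hγ0 hγ1 τ α hτ hα0 hα1 lam hlam π hπpos
    hπsum V ε hε E hE Qstar hQstar Qpi hQpi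
end
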